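/- Let t > 0. There exists δ > 0 such that for every complex z with |z| < δ, both series below converge and Σ_{n≥1} (1/(n·4^n)) b_n(0,t) · (4z/(1+z)²)^n = 2 Σ_{n≥1} (1/n) e^{−nt} L_{n−1}^{(1)}(2nt) z^n, where b_n(0,t) := 2 Σ_{k=1}^{n} binom(2n, n−k) e^{−kt} L_{k−1}^{(1)}(2kt). -/

import Mathlib

open scoped BigOperators

/-- Pochhammer symbol `(a)_k = a(a+1)⋯(a+k-1)` over ℝ. -/
noncomputable def pochR (a : ℝ) (k : ℕ) : ℝ := ∏ i ∈ Finset.range k, (a + i)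

/-- Generalized Laguerre polynomial `L_n^{(α)}(x)`. -/
noncomputable def Lag (n : ℕ) (α : ℝ) (x : ℝ) : ℝ :=
  (1 / (n.factorial : ℝ)) * ∑ j ∈ Finset.range (n + 1),
    (pochR (-(n : ℝ)) j / (j.factorial : ℝ)) * pochR (α + j + 1) (n - j) * x ^ j

/-- `b_n(0,t) = 2 Σ_{k=1}^n C(2n, n-k) e^{-kt} L_{k-1}^{(1)}(2kt)`. -/
noncomputable def b0coef (t : ℝ) (n : ℕ) : ℝ :=
  2 * ∑ k ∈ Finset.Icc 1 n,
    ((2 * n).choose (n - k) : ℝ) * Real.exp (-(k : ℝ) * t) * Lag (k - 1) 1 (2 * k * t)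

/-!
Put `x = z / (1 + z)²`, so that `z ^ (k + 1) = x (z ^ k + 2 z ^ (k + 1) + z ^ (k + 2))`.
The power series `gₖ(x) = ∑ₘ ballot k m xᵐ`, whose coefficients obey the matching recurrence,
satisfy the same relation with `g₀ = 1` and stay bounded in `k`. For `‖x‖ ≤ 1 / 5` a bounded
solution of the recurrence vanishing at `k = 0` is zero, hence `gₖ(x) = z ^ k` (Lagrange inversion
for `z = x (1 + z)²`).

Since `m · ballot k m = k · C(2m, m - k)`, the left-hand side is the double series
`∑_{k,n} (2 / k) e^{-kt} L_{k-1}^{(1)}(2kt) ballot k n xⁿ` summed over `k` first, and summing over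
`n` first gives the right-hand side. The bound `|L_k^{(1)}(y)| ≤ 4 ^ k e ^ y` makes the double series
absolutely convergent for small `z`.
-/

open Finset Nat

-- Pascal-type recurrence read off from `z ^ (k + 1) = x (z ^ k + 2 z ^ (k + 1) + z ^ (k + 2))`.
def ballot : ℕ → ℕ → ℕ
  | 0, 0 => 1
  | _ + 1, 0 => 0
  | 0, _ + 1 => 0
  | k + 1, m + 1 => ballot k m + 2 * ballot (k + 1) m + ballot (k + 2) m

theorem ballot_succ_zero (k : ℕ) : ballot (k + 1) 0 = 0 := rfl

theorem ballot_succ_succ (k m : ℕ) :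
    ballot (k + 1) (m + 1) = ballot k m + 2 * ballot (k + 1) m + ballot (k + 2) m := rfl

theorem ballot_eq_zero_of_lt {k m : ℕ} (h : m < k) : ballot k m = 0 := by
  induction m generalizing k with
  | zero => obtain ⟨k, rfl⟩ := Nat.exists_eq_add_one_of_ne_zero (by omega : k ≠ 0); rfl
  | succ m ih =>
    obtain ⟨k, rfl⟩ := Nat.exists_eq_add_one_of_ne_zero (by omega : k ≠ 0)
    rw [ballot_succ_succ, ih (by omega), ih (by omega), ih (by omega)]

theorem choose_add_two_add_two (n r : ℕ) :
    (n + 2).choose (r + 2) = n.choose r + 2 * n.choose (r + 1) + n.choose (r + 2) := by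
  simp only [Nat.choose_succ_succ', two_mul]
  ring

theorem choose_succ_right_mul_intCast (n r : ℕ) :
    (n.choose (r + 1) : ℤ) * (r + 1) = n.choose r * ((n : ℤ) - r) := by
  rcases le_or_gt r n with h | h
  · have := Nat.choose_succ_right_eq n r
    zify [h] at this
    exact this
  · simp [Nat.choose_eq_zero_of_lt h, Nat.choose_eq_zero_of_lt (h.trans (Nat.lt_succ_self r))]

-- The index `m + k` (instead of `m - k`, equal by symmetry when `k ≤ m`) avoids truncated
-- subtraction, so the identity holds for all `k` and `m`.
theorem mul_ballot (k m : ℕ) : m * ballot k m = k * (2 * m).choose (m + k) := by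
  induction m generalizing k with
  | zero => cases k <;> simp [ballot]
  | succ m ih =>
    cases k with
    | zero => simp [ballot]
    | succ k =>
      rcases Nat.eq_zero_or_pos m with rfl | hm
      · cases k <;> simp [ballot, Nat.choose_eq_zero_iff]; omega
      refine Nat.eq_of_mul_eq_mul_left hm ?_
      rw [show 2 * (m + 1) = 2 * m + 2 by ring, show m + 1 + (k + 1) = m + k + 2 by ring,
        choose_add_two_add_two, ballot_succ_succ]
      have h1 := choose_succ_right_mul_intCast (2 * m) (m + k)
      have h2 := choose_succ_right_mul_intCast (2 * m) (m + k + 1)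
      have i0 := ih k
      have i1 := ih (k + 1)
      have i2 := ih (k + 2)
      rw [show m + (k + 1) = m + k + 1 by ring] at i1
      rw [show m + (k + 2) = m + k + 1 + 1 by ring] at i2
      zify at i0 i1 i2 ⊢
      push_cast at h1 h2 ⊢
      linear_combination (↑m + 1) * (i0 + 2 * i1 + i2) + h1 + h2

theorem ballot_le_four_pow (k m : ℕ) : ballot k m ≤ 4 ^ m := by
  induction m generalizing k with
  | zero => cases k <;> simp [ballot]
  | succ m ih =>
    cases k with
    | zero => simp [ballot]
    | succ k =>
      rw [ballot_succ_succ, pow_succ]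
      linarith [ih k, ih (k + 1), ih (k + 2)]

theorem eq_zero_of_bounded_of_rec {𝕜 : Type*} [NormedField 𝕜] {x : 𝕜} {e : ℕ → 𝕜}
    (hx : ‖x‖ ≤ 1 / 5) (h0 : e 0 = 0)
    (hrec : ∀ k, e (k + 1) = x * (e k + 2 * e (k + 1) + e (k + 2)))
    (hb : ∃ C, ∀ k, ‖e k‖ ≤ C) : e = 0 := by
  -- `‖e (k + 2)‖ ≥ 3 ‖e (k + 1)‖ - ‖e k‖`, so the norms at least double at each step.
  have hgrow : ∀ k, 2 * ‖e k‖ ≤ ‖e (k + 1)‖ := by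
    intro k
    induction k with
    | zero => simp [h0]
    | succ k ih =>
      show 2 * ‖e (k + 1)‖ ≤ ‖e (k + 2)‖
      have h2 : ‖(2 : 𝕜)‖ ≤ 2 := by simpa [one_add_one_eq_two] using norm_add_le (1 : 𝕜) 1
      have key : ‖e (k + 1)‖ ≤ 1 / 5 * (‖e k‖ + 2 * ‖e (k + 1)‖ + ‖e (k + 2)‖) :=
        calc ‖e (k + 1)‖ = ‖x‖ * ‖e k + 2 * e (k + 1) + e (k + 2)‖ := by
              rw [← norm_mul, ← hrec]
          _ ≤ 1 / 5 * (‖e k‖ + 2 * ‖e (k + 1)‖ + ‖e (k + 2)‖) := by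
              gcongr
              refine norm_add₃_le.trans ?_
              rw [norm_mul]
              gcongr
      linarith [norm_nonneg (e (k + 1))]
  have hpow : ∀ k j, 2 ^ j * ‖e k‖ ≤ ‖e (k + j)‖ := by
    intro k j
    induction j with
    | zero => simp
    | succ j ih =>
      rw [pow_succ, mul_comm _ (2 : ℝ), mul_assoc, ← add_assoc]
      linarith [hgrow (k + j)]
  obtain ⟨C, hC⟩ := hb
  funext k
  by_contra hk
  have hpos : 0 < ‖e k‖ := norm_pos_iff.mpr hk
  obtain ⟨j, hj⟩ := pow_unbounded_of_one_lt (C / ‖e k‖) (one_lt_two : (1 : ℝ) < 2)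
  rw [div_lt_iff₀ hpos] at hj
  linarith [hpow k j, hC (k + j)]

noncomputable def ballotSeries (x : ℂ) (k : ℕ) : ℂ := ∑' m, (ballot k m : ℂ) * x ^ m

theorem norm_ballot_mul_pow_le (x : ℂ) (k m : ℕ) :
    ‖(ballot k m : ℂ) * x ^ m‖ ≤ (4 * ‖x‖) ^ m := by
  rw [norm_mul, norm_pow, Complex.norm_natCast, mul_pow]
  gcongr
  exact_mod_cast ballot_le_four_pow k m

theorem hasSum_ballotSeries {x : ℂ} (hx : ‖x‖ < 1 / 4) (k : ℕ) :
    HasSum (fun m => (ballot k m : ℂ) * x ^ m) (ballotSeries x k) :=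
  (Summable.of_norm_bounded (summable_geometric_of_lt_one (by positivity) (by linarith))
    (norm_ballot_mul_pow_le x k)).hasSum

theorem norm_ballotSeries_le {x : ℂ} (hx : ‖x‖ < 1 / 4) (k : ℕ) :
    ‖ballotSeries x k‖ ≤ (1 - 4 * ‖x‖)⁻¹ :=
  tsum_of_norm_bounded (hasSum_geometric_of_lt_one (by positivity) (by linarith))
    (norm_ballot_mul_pow_le x k)

theorem ballotSeries_zero (x : ℂ) : ballotSeries x 0 = 1 := by
  rw [ballotSeries, tsum_eq_single 0]
  · simp [ballot]
  · intro m hm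
    obtain ⟨m, rfl⟩ := Nat.exists_eq_add_one_of_ne_zero hm
    simp [ballot]

theorem ballotSeries_succ {x : ℂ} (hx : ‖x‖ < 1 / 4) (k : ℕ) :
    ballotSeries x (k + 1) =
      x * (ballotSeries x k + 2 * ballotSeries x (k + 1) + ballotSeries x (k + 2)) := by
  have hshift : HasSum (fun m => (ballot (k + 1) (m + 1) : ℂ) * x ^ (m + 1))
      (ballotSeries x (k + 1)) := by
    simpa [ballot_succ_zero] using (hasSum_nat_add_iff' 1).mpr (hasSum_ballotSeries hx (k + 1))
  have hrec : (fun m => (ballot (k + 1) (m + 1) : ℂ) * x ^ (m + 1)) = fun m =>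
      x * ((ballot k m : ℂ) * x ^ m + 2 * ((ballot (k + 1) m : ℂ) * x ^ m) +
        (ballot (k + 2) m : ℂ) * x ^ m) := by
    funext m
    rw [ballot_succ_succ]
    push_cast
    ring
  rw [hrec] at hshift
  exact hshift.unique ((((hasSum_ballotSeries hx k).add
    ((hasSum_ballotSeries hx (k + 1)).mul_left 2)).add (hasSum_ballotSeries hx (k + 2))).mul_left x)

theorem norm_div_one_add_sq_le {z : ℂ} (hz : ‖z‖ ≤ 1 / 10) : ‖z / (1 + z) ^ 2‖ ≤ 2 * ‖z‖ := by
  have h1 : 9 / 10 ≤ ‖1 + z‖ := by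
    have := norm_sub_norm_le (1 : ℂ) (-z)
    rw [norm_one, norm_neg, sub_neg_eq_add] at this
    linarith
  have h2 : 1 / 2 ≤ ‖1 + z‖ ^ 2 := by nlinarith
  rw [norm_div, norm_pow, div_le_iff₀ (by positivity)]
  nlinarith [mul_le_mul_of_nonneg_left h2 (norm_nonneg z)]

theorem ballotSeries_div_one_add_sq {z : ℂ} (hz : ‖z‖ ≤ 1 / 10) (k : ℕ) :
    ballotSeries (z / (1 + z) ^ 2) k = z ^ k := by
  set x := z / (1 + z) ^ 2
  have hx : ‖x‖ ≤ 1 / 5 := by linarith [norm_div_one_add_sq_le hz]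
  have hx4 : ‖x‖ < 1 / 4 := by linarith
  have h1z : 1 + z ≠ 0 := by
    intro h
    have : z = -1 := by linear_combination h
    norm_num [this] at hz
  have hz_rec : ∀ k, z ^ (k + 1) = x * (z ^ k + 2 * z ^ (k + 1) + z ^ (k + 2)) := by
    intro k
    simp only [x]
    field_simp
    ring
  have he := eq_zero_of_bounded_of_rec (e := fun k => ballotSeries x k - z ^ k) hx
    (by simp [ballotSeries_zero])
    (fun k => by linear_combination ballotSeries_succ hx4 k - hz_rec k)
    ⟨(1 - 4 * ‖x‖)⁻¹ + 1, fun k => by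
      refine (norm_sub_le _ _).trans (add_le_add (norm_ballotSeries_le hx4 k) ?_)
      rw [norm_pow]
      exact pow_le_one₀ (norm_nonneg _) (by linarith)⟩
  exact sub_eq_zero.mp (congrFun he k)

theorem hasSum_ballot_succ_mul_pow {z : ℂ} (hz : ‖z‖ ≤ 1 / 10) (k : ℕ) :
    HasSum (fun n => (ballot (k + 1) (n + 1) : ℂ) * (z / (1 + z) ^ 2) ^ (n + 1))
      (z ^ (k + 1)) := by
  have h := hasSum_ballotSeries (x := z / (1 + z) ^ 2)
    (by linarith [norm_div_one_add_sq_le hz]) (k + 1)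
  rw [ballotSeries_div_one_add_sq hz] at h
  simpa [ballot_succ_zero] using (hasSum_nat_add_iff' 1).mpr h

theorem pochR_succ (a : ℝ) (k : ℕ) : pochR a (k + 1) = pochR a k * (a + k) :=
  prod_range_succ _ _

theorem pochR_natCast_add_one_mul_factorial (a m : ℕ) :
    pochR ((a : ℝ) + 1) m * (a ! : ℝ) = ((a + m) ! : ℝ) := by
  induction m with
  | zero => simp [pochR]
  | succ m ih =>
    rw [pochR_succ, ← add_assoc, factorial_succ, mul_right_comm, ih]
    push_cast
    ring

theorem abs_pochR_neg_natCast (n j : ℕ) : |pochR (-(n : ℝ)) j| = n.descFactorial j := by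
  induction j with
  | zero => simp [pochR]
  | succ j ih =>
    rw [pochR_succ, abs_mul, ih, descFactorial_succ, Nat.cast_mul, mul_comm]
    rcases lt_or_ge j n with h | h
    · rw [Nat.cast_sub h.le, abs_of_nonpos (by linarith [(Nat.cast_lt (α := ℝ)).mpr h])]
      ring
    · rcases h.eq_or_lt with rfl | h
      · simp
      · simp [descFactorial_eq_zero_iff_lt.mpr h]

theorem abs_Lag_one_term_le (n j : ℕ) (hj : j ≤ n) {x : ℝ} (hx : 0 ≤ x) :
    |pochR (-(n : ℝ)) j / (j ! : ℝ) * pochR (1 + j + 1) (n - j) * x ^ j| ≤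
      n ! * 4 ^ n * (x ^ j / j !) := by
  have hpoch : pochR ((j + 1 : ℕ) + 1) (n - j) * ((j + 1) ! : ℝ) = ((n + 1) ! : ℝ) := by
    rw [pochR_natCast_add_one_mul_factorial, show j + 1 + (n - j) = n + 1 by omega]
  push_cast at hpoch
  rw [show (1 : ℝ) + j + 1 = j + 1 + 1 by ring]
  have hpos : 0 ≤ pochR ((j : ℝ) + 1 + 1) (n - j) :=
    prod_nonneg fun i _ => by positivity
  rw [abs_mul, abs_mul, abs_div, abs_pochR_neg_natCast, descFactorial_eq_factorial_mul_choose,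
    abs_of_nonneg hpos, abs_of_nonneg (by positivity : (0 : ℝ) ≤ x ^ j), Nat.abs_cast]
  have hchoose : (n.choose j : ℝ) ≤ 2 ^ n := by exact_mod_cast choose_le_two_pow n j
  have hsucc : ((n : ℝ) + 1) ≤ 2 ^ n := by exact_mod_cast Nat.lt_two_pow_self
  have hPj : pochR ((j : ℝ) + 1 + 1) (n - j) * j ! ≤ 2 ^ n * n ! := by
    rw [factorial_succ, factorial_succ] at hpoch
    push_cast at hpoch
    calc pochR ((j : ℝ) + 1 + 1) (n - j) * j !
        ≤ pochR ((j : ℝ) + 1 + 1) (n - j) * j ! * (j + 1) :=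
          le_mul_of_one_le_right (by positivity) (by simp)
      _ = (n + 1) * n ! := by linear_combination hpoch
      _ ≤ 2 ^ n * n ! := by gcongr
  have hj0 : (0 : ℝ) < j ! := by positivity
  calc ((j ! * n.choose j : ℕ) : ℝ) / j ! * pochR ((j : ℝ) + 1 + 1) (n - j) * x ^ j
      = n.choose j * (pochR ((j : ℝ) + 1 + 1) (n - j) * j !) * x ^ j / j ! := by
        push_cast
        field_simp
    _ ≤ 2 ^ n * (2 ^ n * n !) * x ^ j / j ! := by gcongr
    _ = n ! * 4 ^ n * (x ^ j / j !) := by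
        rw [show (4 : ℝ) ^ n = 2 ^ n * 2 ^ n by rw [← mul_pow]; norm_num]
        ring

theorem abs_Lag_one_le (n : ℕ) {x : ℝ} (hx : 0 ≤ x) : |Lag n 1 x| ≤ 4 ^ n * Real.exp x := by
  rw [Lag, abs_mul, abs_of_nonneg (by positivity)]
  calc 1 / (n ! : ℝ) * |∑ j ∈ range (n + 1),
        pochR (-(n : ℝ)) j / (j ! : ℝ) * pochR (1 + j + 1) (n - j) * x ^ j|
      ≤ 1 / (n ! : ℝ) * ∑ j ∈ range (n + 1), n ! * 4 ^ n * (x ^ j / j !) := by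
        gcongr
        exact (abs_sum_le_sum_abs _ _).trans <| sum_le_sum fun j hj =>
          abs_Lag_one_term_le n j (by simpa [Nat.lt_succ_iff] using hj) hx
    _ = 4 ^ n * ∑ j ∈ range (n + 1), x ^ j / j ! := by
        rw [← mul_sum]
        field_simp
    _ ≤ 4 ^ n * Real.exp x := by gcongr; exact Real.sum_le_exp_of_nonneg hx _

noncomputable def herglotzCoeff (t : ℝ) (n : ℕ) : ℂ :=
  2 * (1 / ((n : ℂ) + 1)) * Complex.exp (-((n : ℂ) + 1) * t) *
    ((Lag n 1 (2 * ((n : ℝ) + 1) * t) : ℝ) : ℂ)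

theorem norm_herglotzCoeff_le {t : ℝ} (ht : 0 ≤ t) (n : ℕ) :
    ‖herglotzCoeff t n‖ ≤ 2 * (4 * Real.exp t) ^ (n + 1) := by
  have hinv : ‖1 / ((n : ℂ) + 1)‖ ≤ 1 := by
    rw [norm_div, norm_one, ← Nat.cast_add_one, Complex.norm_natCast]
    exact div_le_one_of_le₀ (by simp) (by positivity)
  have hexp : ‖Complex.exp (-((n : ℂ) + 1) * t)‖ = Real.exp (-((n + 1) * t)) := by
    rw [Complex.norm_exp]; congr 1; simp; ring
  rw [herglotzCoeff, norm_mul, norm_mul, norm_mul, hexp, Complex.norm_real, Real.norm_eq_abs]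
  calc ‖(2 : ℂ)‖ * ‖1 / ((n : ℂ) + 1)‖ * Real.exp (-((n + 1) * t)) *
        |Lag n 1 (2 * ((n : ℝ) + 1) * t)|
      ≤ 2 * 1 * Real.exp (-((n + 1) * t)) * (4 ^ n * Real.exp (2 * ((n + 1) * t))) := by
        gcongr
        · norm_num
        · rw [← mul_assoc]; exact abs_Lag_one_le n (by positivity)
    _ = 2 * 4 ^ n * Real.exp t ^ (n + 1) := by
        have h : Real.exp (-((n + 1) * t)) * Real.exp (2 * ((n + 1) * t)) =
            Real.exp t ^ (n + 1) := by
          rw [← Real.exp_add, ← Real.exp_nat_mul]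
          push_cast
          ring_nf
        linear_combination 2 * 4 ^ n * h
    _ ≤ 2 * (4 * Real.exp t) ^ (n + 1) := by
        rw [mul_pow, ← mul_assoc]
        gcongr
        · norm_num
        · omega

theorem b0coef_succ (t : ℝ) (n : ℕ) :
    (b0coef t (n + 1) : ℂ) =
      (n + 1) * ∑ k ∈ range (n + 1), herglotzCoeff t k * ballot (k + 1) (n + 1) := by
  rw [b0coef, ← Ico_add_one_right_eq_Icc, sum_Ico_eq_sum_range, mul_sum]
  push_cast
  rw [mul_sum]
  refine sum_congr rfl fun k hk => ?_
  have hkn : k ≤ n := Nat.lt_succ_iff.mp (mem_range.mp hk)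
  have hb : ((n + 1 : ℕ) : ℂ) * ballot (k + 1) (n + 1) =
      (k + 1 : ℕ) * ((2 * (n + 1)).choose (n + 1 - (1 + k)) : ℕ) := by
    rw [choose_symm_of_eq_add (by omega : 2 * (n + 1) = (n + 1 - (1 + k)) + (n + 1 + (k + 1))),
      ← Nat.cast_mul, ← Nat.cast_mul, mul_ballot]
  push_cast at hb
  simp only [herglotzCoeff, show 1 + k - 1 = k by omega]
  rw [add_comm (1 : ℂ), add_comm (1 : ℝ)]
  field_simp
  linear_combination (-(Lag k 1 (2 * (k + 1) * t) : ℂ)) * hb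

theorem hasSum_herglotzCoeff_mul_ballot_eq_b0coef (t : ℝ) (x : ℂ) (n : ℕ) :
    HasSum (fun k => herglotzCoeff t k * (ballot (k + 1) (n + 1) * x ^ (n + 1)))
      ((b0coef t (n + 1) : ℂ) / ((n + 1) * 4 ^ (n + 1)) * (4 * x) ^ (n + 1)) := by
  have hsupp : ∀ k ∉ range (n + 1),
      herglotzCoeff t k * (ballot (k + 1) (n + 1) * x ^ (n + 1)) = 0 := fun k hk => by
    rw [ballot_eq_zero_of_lt (by simpa using hk)]
    simp
  suffices h : (b0coef t (n + 1) : ℂ) / ((n + 1) * 4 ^ (n + 1)) * (4 * x) ^ (n + 1) =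
      ∑ k ∈ range (n + 1), herglotzCoeff t k * (ballot (k + 1) (n + 1) * x ^ (n + 1)) by
    rw [h]
    exact hasSum_sum_of_ne_finset_zero hsupp
  rw [b0coef_succ, mul_pow]
  simp_rw [← mul_assoc]
  rw [← sum_mul]
  field_simp

theorem summable_herglotzCoeff_mul_ballot {t : ℝ} (ht : 0 ≤ t) {x : ℂ}
    (hx : ‖x‖ ≤ 1 / (64 * Real.exp t)) :
    Summable fun p : ℕ × ℕ =>
      herglotzCoeff t p.1 * (ballot (p.1 + 1) (p.2 + 1) * x ^ (p.2 + 1)) := by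
  have hM : 1 ≤ 4 * Real.exp t := by linarith [Real.add_one_le_exp t]
  have hx4 : (4 * Real.exp t) * (4 * ‖x‖) ≤ 1 / 4 := by
    rw [le_div_iff₀ (by positivity)] at hx
    linarith
  refine Summable.of_norm_bounded (g := fun p : ℕ × ℕ => (1 / 2 : ℝ) ^ p.1 * (1 / 2) ^ p.2)
    ((summable_geometric_two).mul_of_nonneg summable_geometric_two (fun _ => by positivity)
      (fun _ => by positivity)) ?_
  rintro ⟨k, n⟩
  rcases le_or_gt k n with hkn | hnk
  · calc ‖herglotzCoeff t k * (ballot (k + 1) (n + 1) * x ^ (n + 1))‖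
        ≤ 2 * (4 * Real.exp t) ^ (k + 1) * (4 * ‖x‖) ^ (n + 1) := by
          rw [norm_mul]
          exact mul_le_mul (norm_herglotzCoeff_le ht k) (norm_ballot_mul_pow_le x _ _)
            (norm_nonneg _) (by positivity)
      _ ≤ 2 * (4 * Real.exp t) ^ (n + 1) * (4 * ‖x‖) ^ (n + 1) := by
          gcongr
      _ ≤ 2 * (1 / 4) ^ (n + 1) := by
          rw [mul_assoc, ← mul_pow]
          gcongr
      _ ≤ (1 / 2) ^ k * (1 / 2) ^ n := by
          have hk : (1 / 2 : ℝ) ^ n ≤ (1 / 2) ^ k :=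
            pow_le_pow_of_le_one (by norm_num) (by norm_num) hkn
          rw [show (1 / 4 : ℝ) = 1 / 2 * (1 / 2) by norm_num, mul_pow, pow_succ]
          nlinarith [mul_le_mul_of_nonneg_right hk (by positivity : (0 : ℝ) ≤ (1 / 2) ^ n)]
  · rw [ballot_eq_zero_of_lt (by omega)]
    simp

theorem stmt12 (t : ℝ) (ht : 0 < t) :
    ∃ δ > 0, ∀ z : ℂ, ‖z‖ < δ → ∃ S : ℂ,
      HasSum (fun n : ℕ => ((b0coef t (n + 1) : ℝ) : ℂ) / (((n : ℂ) + 1) * 4 ^ (n + 1)) *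
        (4 * z / (1 + z) ^ 2) ^ (n + 1)) S ∧
      HasSum (fun n : ℕ => 2 * (1 / ((n : ℂ) + 1)) * Complex.exp (-((n : ℂ) + 1) * t) *
        ((Lag n 1 (2 * ((n : ℝ) + 1) * t) : ℝ) : ℂ) * z ^ (n + 1)) S := by
  refine ⟨min (1 / 10) (1 / (128 * Real.exp t)), by positivity, fun z hz => ?_⟩
  have hz10 : ‖z‖ ≤ 1 / 10 := hz.le.trans (min_le_left _ _)
  have hx : ‖z / (1 + z) ^ 2‖ ≤ 1 / (64 * Real.exp t) := by
    have hzt : ‖z‖ ≤ 1 / (128 * Real.exp t) := hz.le.trans (min_le_right _ _)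
    calc ‖z / (1 + z) ^ 2‖ ≤ 2 * ‖z‖ := norm_div_one_add_sq_le hz10
      _ ≤ 2 * (1 / (128 * Real.exp t)) := by gcongr
      _ = 1 / (64 * Real.exp t) := by field_simp; norm_num
  obtain ⟨S, hS⟩ := summable_herglotzCoeff_mul_ballot ht.le hx
  refine ⟨S, ?_, hS.prod_fiberwise fun k => ?_⟩
  · simp_rw [mul_div_assoc (4 : ℂ)]
    exact ((Equiv.prodComm ℕ ℕ).hasSum_iff.mpr hS).prod_fiberwise
      (hasSum_herglotzCoeff_mul_ballot_eq_b0coef t _)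
  · exact (hasSum_ballot_succ_mul_pow hz10 k).mul_left (herglotzCoeff t k)
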